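/- Every co-computably-enumerable equivalence relation with infinitely many equivalence classes is light, i.e., there is no dark co-ceer: if R is an equivalence relation on ℕ whose complement (as a set of pairs) is computably enumerable and R has infinitely many equivalence classes, then Id ≤_c R. -/

import Mathlib

/-! Since `¬ R` is c.e., so is the relation "`z` is inequivalent to every element of the finite
list `L`", and by `InfClasses R` some such `z` always exists; a dovetailed search therefore
computes such a `z` from `L`. Iterating this search from the empty list enumerates pairwise
inequivalent numbers, and the enumeration reduces `Eq` to `R`. -/

/-- Computable reducibility between binary relations on ℕ: `R ≤_c S`. -/
def CRed (R S : ℕ → ℕ → Prop) : Prop :=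
  ∃ f : ℕ → ℕ, Computable f ∧ ∀ x y, R x y ↔ S (f x) (f y)

/-- `R` has infinitely many equivalence classes. -/
def InfClasses (R : ℕ → ℕ → Prop) : Prop :=
  ∀ F : Finset ℕ, ∃ z, ∀ x ∈ F, ¬ R z x

/-- `R` has an infinite computably enumerable transversal. -/
def HasCeTransversal (R : ℕ → ℕ → Prop) : Prop :=
  ∃ A : Set ℕ, A.Infinite ∧ REPred (· ∈ A) ∧ ∀ x ∈ A, ∀ y ∈ A, x ≠ y → ¬ R x y

/-- `R` is dark: infinitely many classes but no infinite c.e. transversal. -/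
def Dark (R : ℕ → ℕ → Prop) : Prop := InfClasses R ∧ ¬ HasCeTransversal R

open Nat.Partrec Encodable

namespace REPred

variable {α β : Type*} [Primcodable α] [Primcodable β]

theorem comp {p : β → Prop} (hp : REPred p) {f : α → β} (hf : Computable f) :
    REPred fun a => p (f a) :=
  Partrec.comp hp hf

/-- `q a s`: a program semideciding `p` halts on `a` within `s` steps. -/
theorem exists_primrecRel_monotone {p : α → Prop} (hp : REPred p) :
    ∃ q : α → ℕ → Prop, PrimrecRel q ∧ (∀ a, Monotone (q a)) ∧ ∀ a, p a ↔ ∃ s, q a s := by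
  obtain ⟨c, hc⟩ := Code.exists_code.1 hp
  have hdom : ∀ a, (Code.eval c (encode a)).Dom ↔ p a := by
    intro a
    rw [hc]
    simp [Part.assert]
  refine ⟨fun a s => (Code.evaln s c (encode a)).isSome, ?_, ?_, ?_⟩
  · exact PrimrecRel.comp₂ Primrec.eq
      (Primrec.option_isSome.comp (Code.primrec_evaln.comp
        ((Primrec.snd.pair (Primrec.const c)).pair (Primrec.encode.comp Primrec.fst))))
      (Primrec₂.const true)
  · intro a s t hst h
    obtain ⟨v, hv⟩ := Option.isSome_iff_exists.1 h
    exact Option.isSome_iff_exists.2 ⟨v, Code.evaln_mono hst hv⟩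
  · intro a
    rw [← hdom, Part.dom_iff_mem]
    simp only [Code.evaln_complete, Option.isSome_iff_exists, Option.mem_def]
    exact exists_comm

theorem exists_partrec_choice {p : α → ℕ → Prop} (hp : REPred fun x : α × ℕ => p x.1 x.2) :
    ∃ g : α →. ℕ, Partrec g ∧ ∀ a, ((g a).Dom ↔ ∃ n, p a n) ∧ ∀ n ∈ g a, p a n := by
  classical
  obtain ⟨q, hq, -, hpq⟩ := exists_primrecRel_monotone hp
  -- `k = Nat.pair s n` dovetails the candidate witness `n` with the step bound `s`.
  let search : α → ℕ → Option ℕ := fun a k =>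
    if q (a, k.unpair.2) k.unpair.1 then some k.unpair.2 else none
  have hsearch : ∀ a n, (∃ k, n ∈ search a k) ↔ p a n := by
    intro a n
    constructor
    · rintro ⟨k, hk⟩
      simp only [search, Option.mem_def, Option.ite_none_right_eq_some, Option.some.injEq] at hk
      obtain ⟨hk, rfl⟩ := hk
      exact (hpq _).2 ⟨_, hk⟩
    · intro h
      obtain ⟨s, hs⟩ := (hpq (a, n)).1 h
      exact ⟨Nat.pair s n, by simp [search, hs]⟩
  have hsearch_comp : Computable₂ search :=
    (Primrec.ite (hq.comp (Primrec.fst.pair (Primrec.snd.comp (Primrec.unpair.comp Primrec.snd)))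
        (Primrec.fst.comp (Primrec.unpair.comp Primrec.snd)))
      (Primrec.option_some.comp (Primrec.snd.comp (Primrec.unpair.comp Primrec.snd)))
      (Primrec.const none)).to_comp
  refine ⟨fun a => Nat.rfindOpt (search a), Partrec.rfindOpt hsearch_comp, fun a => ⟨?_, ?_⟩⟩
  · rw [Nat.rfindOpt_dom, exists_comm]
    exact exists_congr fun n => hsearch a n
  · intro n hn
    exact (hsearch a n).1 (Nat.rfindOpt_spec hn)

theorem exists_nat {p : α → ℕ → Prop} (hp : REPred fun x : α × ℕ => p x.1 x.2) :
    REPred fun a => ∃ n, p a n :=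
  let ⟨_, hg, hgp⟩ := exists_partrec_choice hp
  hg.dom_re.of_eq fun a => (hgp a).1

theorem exists_computable_choice {p : α → ℕ → Prop} (hp : REPred fun x : α × ℕ => p x.1 x.2)
    (h : ∀ a, ∃ n, p a n) : ∃ f : α → ℕ, Computable f ∧ ∀ a, p a (f a) := by
  obtain ⟨g, hg, hgp⟩ := exists_partrec_choice hp
  exact ⟨fun a => (g a).get ((hgp a).1.2 (h a)), hg.of_eq_tot fun a => Part.get_mem _,
    fun a => (hgp a).2 _ (Part.get_mem _)⟩

theorem forall_mem_list {p : α → β → Prop} (hp : REPred fun x : α × β => p x.1 x.2) :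
    REPred fun x : List α × β => ∀ a ∈ x.1, p a x.2 := by
  classical
  obtain ⟨q, hq, hmono, hpq⟩ := exists_primrecRel_monotone hp
  have hlist : PrimrecRel fun (x : List α × β) s => ∀ a ∈ x.1, q (a, x.2) s :=
    (PrimrecRel.forall_mem_list (R := fun a (y : β × ℕ) => q (a, y.1) y.2)
        (hq.comp (Primrec.fst.pair (Primrec.fst.comp Primrec.snd))
          (Primrec.snd.comp Primrec.snd))).comp
      (Primrec.fst.comp Primrec.fst) ((Primrec.snd.comp Primrec.fst).pair Primrec.snd)
  refine (exists_nat (p := fun x s => ∀ a ∈ x.1, q (a, x.2) s)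
    hlist.computablePred.to_re).of_eq fun x => ?_
  show (∃ s, ∀ a ∈ x.1, q (a, x.2) s) ↔ ∀ a ∈ x.1, p a x.2
  -- monotonicity in `s` lets one common step bound serve the whole finite list
  constructor
  · rintro ⟨s, hs⟩ a ha
    exact (hpq (a, x.2)).2 ⟨s, hs a ha⟩
  · intro h
    choose! S hS using fun a ha => (hpq (a, x.2)).1 (h a ha)
    exact ⟨x.1.toFinset.sup S, fun a ha =>
      hmono _ (Finset.le_sup (List.mem_toFinset.2 ha)) (hS a ha)⟩

end REPred

section GreedyPrefix

variable {α : Type*}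

def greedyPrefix (next : List α → α) : ℕ → List α
  | 0 => []
  | n + 1 => greedyPrefix next n ++ [next (greedyPrefix next n)]

theorem next_greedyPrefix_mem (next : List α → α) {m n : ℕ} (h : m < n) :
    next (greedyPrefix next m) ∈ greedyPrefix next n := by
  induction n with
  | zero => omega
  | succ n ih =>
    rw [greedyPrefix, List.mem_append, List.mem_singleton]
    rcases Nat.lt_succ_iff_lt_or_eq.1 h with h | rfl
    · exact Or.inl (ih h)
    · exact Or.inr rfl

theorem computable_greedyPrefix [Primcodable α] {next : List α → α} (h : Computable next) :
    Computable (greedyPrefix next) :=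
  (Computable.nat_rec Computable.id (Computable.const [])
      (Computable.list_concat.comp (Computable.snd.comp Computable.snd)
        (h.comp (Computable.snd.comp Computable.snd))).to₂).of_eq
    fun n => by induction n <;> simp_all [greedyPrefix]

end GreedyPrefix

theorem cRed_eq_of_not_rel_of_lt {R : ℕ → ℕ → Prop} (hR : Equivalence R) {f : ℕ → ℕ}
    (hf : Computable f) (h : ∀ m n, m < n → ¬ R (f n) (f m)) : CRed Eq R := by
  refine ⟨f, hf, fun x y => ⟨fun hxy => hxy ▸ hR.refl _, fun hxy => ?_⟩⟩
  by_contra hne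
  rcases Nat.lt_or_gt_of_ne hne with hlt | hgt
  · exact h x y hlt (hR.symm hxy)
  · exact h y x hgt hxy

theorem exists_computable_not_rel_of_mem {R : ℕ → ℕ → Prop}
    (hco : REPred fun p : ℕ × ℕ => ¬ R p.1 p.2) (hinf : InfClasses R) :
    ∃ next : List ℕ → ℕ, Computable next ∧ ∀ L, ∀ x ∈ L, ¬ R (next L) x :=
  REPred.exists_computable_choice
    (REPred.forall_mem_list (p := fun x z => ¬ R z x)
      (hco.comp (Computable.snd.pair Computable.fst)))
    fun L : List ℕ => (hinf L.toFinset).imp fun _ hz x hx => hz x (List.mem_toFinset.2 hx)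

theorem no_dark_coceer (R : ℕ → ℕ → Prop) (hR : Equivalence R)
    (hco : REPred (fun p : ℕ × ℕ => ¬ R p.1 p.2))
    (hinf : InfClasses R) :
    CRed Eq R := by
  obtain ⟨next, hnext, hnew⟩ := exists_computable_not_rel_of_mem hco hinf
  exact cRed_eq_of_not_rel_of_lt hR (hnext.comp (computable_greedyPrefix hnext))
    fun m n hmn => hnew _ _ (next_greedyPrefix_mem next hmn)
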